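/- Let (V, Q) be a positive definite quadratic space over ℚ, p an odd prime, γ_p the least quadratic non-residue mod p, and x₁, x₂ ∈ V linearly independent with integer Gram matrix G. If ν_p(det G) is odd, then γ_p·Q(x₁) is not represented by the subspace ℚx₁ + ℚx₂. -/

import Mathlib

/-!
Completing the square, `Q(x₁) · Q(a x₁ + b x₂) = (a Q(x₁) + b B)² + det G · b²` with
`B = B(x₁, x₂)`, so a representation of `γ Q(x₁)` yields a rational solution of
`u² + det G · w² = γ m²` with `m = Q(x₁) ≠ 0`. Clearing denominators and absorbing even
powers of `p` into `w`, this becomes `U² + p c W² = γ M²` over `ℤ` with `p ∤ c`. If `p ∤ M`,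
reducing mod `p` makes `γ` a square; otherwise `p` divides `U`, then `W`, and dividing by `p²`
gives a smaller solution, so infinite descent rules out every solution with `M ≠ 0`.
-/

open QuadraticMap

theorem isSquare_of_sq_eq_mul_sq {K : Type*} [Field K] {γ u m : K} (hm : m ≠ 0)
    (h : u ^ 2 = γ * m ^ 2) : IsSquare γ :=
  ⟨u / m, by field_simp; linear_combination -h⟩

theorem eq_zero_of_sq_add_prime_mul_mul_sq_eq {p : ℕ} [Fact p.Prime] {c γ : ℤ}
    (hc : ¬ (p : ℤ) ∣ c) (hγ : ¬ IsSquare (γ : ZMod p)) {U W M : ℤ}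
    (h : U ^ 2 + p * c * W ^ 2 = γ * M ^ 2) : M = 0 := by
  have hp : Prime (p : ℤ) := Nat.prime_iff_prime_int.mp Fact.out
  have hp0 : (p : ℤ) ≠ 0 := hp.ne_zero
  by_contra hM
  by_cases hpM : (p : ℤ) ∣ M
  · obtain ⟨M', hMM'⟩ := hpM
    rw [hMM'] at h hM
    obtain ⟨U', rfl⟩ : (p : ℤ) ∣ U :=
      hp.dvd_of_dvd_pow (n := 2) ⟨γ * p * M' ^ 2 - c * W ^ 2, by linear_combination h⟩
    have h' : p * U' ^ 2 + c * W ^ 2 = γ * p * M' ^ 2 :=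
      mul_left_cancel₀ hp0 (by linear_combination h)
    obtain ⟨W', rfl⟩ : (p : ℤ) ∣ W :=
      hp.dvd_of_dvd_pow (n := 2) <| (hp.dvd_mul.mp
        ⟨γ * M' ^ 2 - U' ^ 2, by linear_combination h'⟩).resolve_left hc
    have hM' : M' ≠ 0 := right_ne_zero_of_mul hM
    exact hM' <| eq_zero_of_sq_add_prime_mul_mul_sq_eq hc hγ (U := U') (W := W')
      (mul_left_cancel₀ (pow_ne_zero 2 hp0) (by linear_combination (p : ℤ) * h'))
  · refine hγ (isSquare_of_sq_eq_mul_sq (u := (U : ZMod p)) (m := (M : ZMod p)) ?_ ?_)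
    · rwa [Ne, ZMod.intCast_zmod_eq_zero_iff_dvd]
    · simpa using congrArg (Int.cast : ℤ → ZMod p) h
termination_by M.natAbs
decreasing_by
  rw [hMM', Int.natAbs_mul]
  exact lt_mul_left (Int.natAbs_pos.mpr hM') (by simpa using (Fact.out : p.Prime).one_lt)

theorem Int.exists_eq_pow_padicValInt_mul_and_not_dvd {p : ℕ} [Fact p.Prime] {D : ℤ} (hD : D ≠ 0) :
    ∃ c : ℤ, D = p ^ padicValInt p D * c ∧ ¬ (p : ℤ) ∣ c := by
  rw [padicValInt.of_ne_one_ne_zero (Fact.out : p.Prime).ne_one hD]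
  refine (Int.finiteMultiplicity_iff.mpr ⟨?_, hD⟩).exists_eq_pow_mul_and_not_dvd
  simpa using (Fact.out : p.Prime).ne_one

theorem Int.eq_zero_of_sq_add_mul_sq_eq_mul_sq {p : ℕ} [Fact p.Prime] {D γ : ℤ}
    (hD : Odd (padicValInt p D)) (hγ : ¬ IsSquare (γ : ZMod p)) {U W M : ℤ}
    (h : U ^ 2 + D * W ^ 2 = γ * M ^ 2) : M = 0 := by
  have hD0 : D ≠ 0 := by rintro rfl; simp at hD
  obtain ⟨c, hDc, hc⟩ := Int.exists_eq_pow_padicValInt_mul_and_not_dvd (p := p) hD0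
  obtain ⟨s, hs⟩ := hD
  rw [hs] at hDc
  refine eq_zero_of_sq_add_prime_mul_mul_sq_eq hc hγ (U := U) (W := p ^ s * W) ?_
  rw [← h, hDc]
  ring

theorem Rat.eq_zero_of_sq_add_mul_sq_eq_mul_sq {p : ℕ} [Fact p.Prime] {D γ : ℤ}
    (hD : Odd (padicValInt p D)) (hγ : ¬ IsSquare (γ : ZMod p)) {u w m : ℚ}
    (h : u ^ 2 + D * w ^ 2 = γ * m ^ 2) : m = 0 := by
  have hint : (u.num * w.den * m.den) ^ 2 + D * (w.num * u.den * m.den) ^ 2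
      = γ * (m.num * u.den * w.den) ^ 2 := by
    qify
    rw [← Rat.mul_den_eq_num u, ← Rat.mul_den_eq_num w, ← Rat.mul_den_eq_num m]
    linear_combination ((u.den : ℚ) * w.den * m.den) ^ 2 * h
  simpa using Int.eq_zero_of_sq_add_mul_sq_eq_mul_sq hD hγ hint

theorem QuadraticMap.map_smul_add_smul {R M : Type*} [CommRing R] [AddCommGroup M] [Module R M]
    (Q : QuadraticForm R M) (a b : R) (x y : M) :
    Q (a • x + b • y) = a ^ 2 * Q x + a * b * polar Q x y + b ^ 2 * Q y := by
  rw [QuadraticMap.map_add Q, QuadraticMap.map_smul, QuadraticMap.map_smul, polar_smul_left,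
    polar_smul_right]
  simp only [smul_eq_mul]
  ring

theorem det_eq_of_eq_polar_div_two {K V : Type*} [Field K] [NeZero (2 : K)] [AddCommGroup V]
    [Module K V] (Q : QuadraticForm K V) (x y : V) (G : Matrix (Fin 2) (Fin 2) ℤ)
    (hG : ∀ i j, (G i j : K) = polar Q (![x, y] i) (![x, y] j) / 2) :
    (G.det : K) = Q x * Q y - (polar Q x y / 2) ^ 2 := by
  rw [Matrix.det_fin_two]
  push_cast
  simp only [hG, Matrix.cons_val_zero, Matrix.cons_val_one, polar_self, polar_comm Q y x,
    nsmul_eq_mul]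
  field_simp
  ring

theorem stmt10_general (p : ℕ) (hp : p.Prime) (γ : ℕ)
    (hγns : ¬ IsSquare ((γ : ZMod p)))
    (V : Type) [AddCommGroup V] [Module ℚ V] (Q : QuadraticForm ℚ V)
    (hpos : ∀ x : V, x ≠ 0 → 0 < Q x)
    (x₁ x₂ : V) (hli : LinearIndependent ℚ ![x₁, x₂])
    (G : Matrix (Fin 2) (Fin 2) ℤ)
    (hG : ∀ i j, (G i j : ℚ) = QuadraticMap.polar (⇑Q) (![x₁, x₂] i) (![x₁, x₂] j) / 2)
    (hval : Odd (padicValInt p G.det)) :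
    ¬ ∃ a b : ℚ, Q (a • x₁ + b • x₂) = (γ : ℚ) * Q x₁ := by
  rintro ⟨a, b, hrep⟩
  have := Fact.mk hp
  have hQx₁ : Q x₁ ≠ 0 := (hpos x₁ (by simpa using hli.ne_zero 0)).ne'
  have hsq : (a * Q x₁ + b * (polar Q x₁ x₂ / 2)) ^ 2 + (G.det : ℚ) * b ^ 2
      = ((γ : ℤ) : ℚ) * Q x₁ ^ 2 := by
    rw [det_eq_of_eq_polar_div_two Q x₁ x₂ G hG]
    push_cast
    linear_combination Q x₁ * (hrep - Q.map_smul_add_smul a b x₁ x₂)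
  exact hQx₁ (Rat.eq_zero_of_sq_add_mul_sq_eq_mul_sq hval (by simpa using hγns) hsq)

/-- Let `(V, Q)` be a positive definite quadratic space over `ℚ`, `p` an odd prime,
`γ` the least quadratic non-residue mod `p`, and `x₁, x₂ ∈ V` linearly independent
with integer Gram matrix `G`.  If `ν_p(det G)` is odd, then `γ·Q(x₁)` is not
represented by `ℚx₁ + ℚx₂`. -/
theorem stmt10 (p : ℕ) (hp : p.Prime) (hodd : p ≠ 2) (γ : ℕ)
    (hγns : ¬ IsSquare ((γ : ZMod p)))
    (hγleast : ∀ m : ℕ, m < γ → IsSquare ((m : ZMod p)))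
    (V : Type) [AddCommGroup V] [Module ℚ V] (Q : QuadraticForm ℚ V)
    (hpos : ∀ x : V, x ≠ 0 → 0 < Q x)
    (x₁ x₂ : V) (hli : LinearIndependent ℚ ![x₁, x₂])
    (G : Matrix (Fin 2) (Fin 2) ℤ)
    (hG : ∀ i j, (G i j : ℚ) = QuadraticMap.polar (⇑Q) (![x₁, x₂] i) (![x₁, x₂] j) / 2)
    (hval : Odd (padicValInt p G.det)) :
    ¬ ∃ a b : ℚ, Q (a • x₁ + b • x₂) = (γ : ℚ) * Q x₁ :=
  stmt10_general p hp γ hγns V Q hpos x₁ x₂ hli G hG hval
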